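/- If a probability kernel R satisfies a.e. totality with respect to σ(R) (and ν), then defining π(B) := ∫ R_x(B) ν(dx), the kernel R is stationary with respect to π (∫ R_x(B) π(dx) = π(B) for all B), π agrees with ν on σ(R), and R is a regular conditional distribution for π given σ(R). -/

import Mathlib

open MeasureTheory

/-- The σ-algebra generated by a probability kernel `R`. -/
def kernelSigma {X : Type*} [mX : MeasurableSpace X] (R : X → Measure X) : MeasurableSpace X :=
  ⨆ (B : Set X) (_ : MeasurableSet B), MeasurableSpace.comap (fun x => R x B) inferInstance

/-- The atom of `x` in a σ-algebra `m`. -/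
def atomOf {X : Type*} (m : MeasurableSpace X) (x : X) : Set X :=
  ⋂₀ {A | m.MeasurableSet' A ∧ x ∈ A}

/-- `R` is a regular conditional distribution for `ν` given the sub-σ-algebra `G`
(all relative to the ambient σ-algebra `mX`). -/
def IsRCD {X : Type*} [mX : MeasurableSpace X] (ν : Measure X) (R : X → Measure X)
    (G : MeasurableSpace X) : Prop :=
  (∀ B : Set X, MeasurableSet B → Measurable[G] fun x => R x B) ∧
  (∀ A B : Set X, G.MeasurableSet' A → MeasurableSet B →
    ∫⁻ x in A, R x B ∂ν = ν (A ∩ B))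

/-- `G` is countably generated under `ν`. -/
def CGUnder {X : Type*} [mX : MeasurableSpace X] (ν : Measure X)
    (G : MeasurableSpace X) : Prop :=
  ∃ C : Set X, G.MeasurableSet' C ∧ ν C = 1 ∧
    @MeasurableSpace.CountablyGenerated C (G.comap Subtype.val)

lemma ks_le {X : Type*} [mX : MeasurableSpace X] (R : X → Measure X)
    (hRm : ∀ B : Set X, MeasurableSet B → Measurable fun x => R x B) :
    kernelSigma R ≤ mX := by
  refine iSup_le fun B => iSup_le fun hB => ?_
  exact measurable_iff_comap_le.mp (hRm B hB)

lemma meas_ks {X : Type*} [mX : MeasurableSpace X] (R : X → Measure X)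
    {B : Set X} (hB : MeasurableSet B) :
    Measurable[kernelSigma R] fun x => R x B := by
  rw [measurable_iff_comap_le]
  exact le_iSup_of_le B (le_iSup_of_le hB le_rfl)

lemma key_lintegral {X : Type*} [mX : MeasurableSpace X] (R : X → Measure X)
    (hRm : ∀ B : Set X, MeasurableSet B → Measurable fun x => R x B)
    {x : X} (hRp : IsProbabilityMeasure (R x))
    (hx : R x (atomOf (kernelSigma R) x) = 1)
    {g : X → ENNReal} (hg : Measurable[kernelSigma R] g) :
    ∫⁻ y, g y ∂(R x) = g x := by
  have hT : MeasurableSet[kernelSigma R] (g ⁻¹' {g x}) := hg (measurableSet_singleton _)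
  have hTm : MeasurableSet (g ⁻¹' {g x}) := ks_le R hRm _ hT
  have hsub : atomOf (kernelSigma R) x ⊆ g ⁻¹' {g x} :=
    Set.sInter_subset_of_mem ⟨hT, rfl⟩
  have h1 : R x (g ⁻¹' {g x}) = 1 :=
    le_antisymm prob_le_one (hx ▸ measure_mono hsub)
  have h0 : R x (g ⁻¹' {g x})ᶜ = 0 := by
    rw [measure_compl hTm (measure_ne_top _ _), h1, hRp.measure_univ, tsub_self]
  have hae : g =ᵐ[R x] fun _ => g x := by
    refine ae_iff.mpr (measure_mono_null (fun y hy => ?_) h0)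
    exact hy
  rw [lintegral_congr_ae hae, lintegral_const, hRp.measure_univ, mul_one]

theorem stmt17 {X : Type*} [mX : MeasurableSpace X] [StandardBorelSpace X]
    (ν : Measure X) [IsProbabilityMeasure ν]
    (R : X → Measure X) (hRp : ∀ x, IsProbabilityMeasure (R x))
    (hRm : ∀ B : Set X, MeasurableSet B → Measurable fun x => R x B)
    (G : Set X) (hG : (kernelSigma R).MeasurableSet' G) (hνG : ν G = 1)
    (htot : ∀ x ∈ G, R x (atomOf (kernelSigma R) x) = 1) :
    (∀ B : Set X, MeasurableSet B → ∫⁻ x, R x B ∂(ν.bind R) = (ν.bind R) B) ∧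
    (∀ A : Set X, (kernelSigma R).MeasurableSet' A → (ν.bind R) A = ν A) ∧
    IsRCD (mX := mX) (ν.bind R) R (kernelSigma R) := by
  have mle := ks_le R hRm
  have hRmeas : Measurable R := Measure.measurable_of_measurable_coe R hRm
  have hGm : MeasurableSet G := mle _ hG
  have hGc : ν Gᶜ = 0 := by
    rw [measure_compl hGm (measure_ne_top _ _), hνG, measure_univ, tsub_self]
  -- ae-on-G congruence
  have haeG : ∀ {f₁ f₂ : X → ENNReal}, (∀ y ∈ G, f₁ y = f₂ y) → f₁ =ᵐ[ν] f₂ := by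
    intro f₁ f₂ h
    refine ae_iff.mpr (measure_mono_null (fun y hy => ?_) hGc)
    exact fun hyG => hy (h y hyG)
  have hcore : ∀ (A B : Set X), MeasurableSet[kernelSigma R] A → MeasurableSet B →
      (∫⁻ x in A, R x B ∂(ν.bind R) = ∫⁻ x in A, R x B ∂ν ∧
       (ν.bind R) (A ∩ B) = ∫⁻ x in A, R x B ∂ν) := by
    intro A B hA hB
    set g : X → ENNReal := A.indicator (fun y => R y B) with hgdef
    have hg : Measurable[kernelSigma R] g := (meas_ks R hB).indicator hA
    have hgm : Measurable g := hg.mono mle le_rfl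
    have hAm : MeasurableSet A := mle _ hA
    have hind : ∀ μ : Measure X, ∫⁻ x, g x ∂μ = ∫⁻ x in A, R x B ∂μ := by
      intro μ; rw [hgdef, lintegral_indicator hAm]
    -- inner integral collapses on G
    have hinner : ∀ y ∈ G, ∫⁻ x, g x ∂(R y) = g y := fun y hy =>
      key_lintegral R hRm (hRp y) (htot y hy) hg
    have h1 : ∫⁻ x in A, R x B ∂(ν.bind R) = ∫⁻ x in A, R x B ∂ν := by
      rw [← hind, Measure.lintegral_bind hRmeas.aemeasurable hgm.aemeasurable,
        lintegral_congr_ae (haeG hinner), hind]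
    refine ⟨h1, ?_⟩
    have hRA : ∀ y ∈ G, R y A = A.indicator (fun _ => (1 : ENNReal)) y := by
      intro y hy
      have := key_lintegral R hRm (hRp y) (htot y hy)
        ((measurable_const (a := (1:ENNReal))).indicator hA (m := kernelSigma R))
      rwa [lintegral_indicator_const hAm, one_mul] at this
    have hRAB : ∀ y ∈ G, R y (A ∩ B) = g y := by
      intro y hy
      by_cases hyA : y ∈ A
      · have hA1 : R y A = 1 := by rw [hRA y hy, Set.indicator_of_mem hyA]
        have hAc : R y Aᶜ = 0 := by
          have := (hRp y).measure_univ
          rw [measure_compl hAm (measure_ne_top _ _), hA1, this, tsub_self]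
        have hsplit : R y B = R y (B ∩ A) + R y (B \ A) :=
          (measure_inter_add_diff B hAm).symm
        have hBd : R y (B \ A) = 0 :=
          le_antisymm (le_trans (measure_mono (Set.diff_subset_compl B A)) hAc.le) zero_le
        rw [Set.inter_comm, hgdef, Set.indicator_of_mem hyA]
        rw [hsplit, hBd, add_zero]
      · have hA0 : R y A = 0 := by rw [hRA y hy, Set.indicator_of_notMem hyA]
        have : R y (A ∩ B) = 0 :=
          le_antisymm (le_trans (measure_mono Set.inter_subset_left) hA0.le) zero_le
        rw [this, hgdef, Set.indicator_of_notMem hyA]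
    rw [Measure.bind_apply (hAm.inter hB) hRmeas.aemeasurable,
      lintegral_congr_ae (haeG hRAB), hind]
  have hstat : ∀ B : Set X, MeasurableSet B →
      ∫⁻ x, R x B ∂(ν.bind R) = (ν.bind R) B := by
    intro B hB
    have h := hcore Set.univ B MeasurableSet.univ hB
    rw [Measure.restrict_univ] at h
    rw [Set.univ_inter] at h
    rw [h.1, ← h.2]
  have hagree : ∀ A : Set X, (kernelSigma R).MeasurableSet' A → (ν.bind R) A = ν A := by
    intro A hA
    have h := (hcore A Set.univ hA MeasurableSet.univ).2
    rw [Set.inter_univ] at h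
    rw [h]
    calc ∫⁻ x in A, R x Set.univ ∂ν = ∫⁻ _ in A, 1 ∂ν := by
          refine setLIntegral_congr_fun (mle _ hA) (fun y _ => ?_)
          exact (hRp y).measure_univ
      _ = ν A := by rw [setLIntegral_one]
  exact ⟨hstat, hagree, fun B hB => meas_ks R (mle _ hB),
    fun A B hA hB =>
      (hcore A B hA (mle _ hB)).1.trans (hcore A B hA (mle _ hB)).2.symm⟩
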